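/- Let G₁, G₂ be connected graphs, both containing odd cycles, with exponents γ₁, γ₂ and diameters d₁, d₂ ≥ 1. Then the diameter of G₁ ⊗ G₂ is at least γ₁ if γ₁ = γ₂, and at least min{γ₁, γ₂} + 1 if γ₁ ≠ γ₂. -/
import Mathlib


/-- Existence of a walk of length `k` from `x` to `y` in the graph with adjacency
relation `adj` (loops allowed, no parallel edges). -/
def GWalk {V : Type*} (adj : V → V → Prop) : ℕ → V → V → Prop
  | 0, x, y => x = y
  | k + 1, x, y => ∃ z, adj x z ∧ GWalk adj k z y

/-- Distance: the length of a shortest walk (= shortest path) from `x` to `y`. -/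
noncomputable def GDist {V : Type*} (adj : V → V → Prop) (x y : V) : ℕ :=
  sInf {k | GWalk adj k x y}

/-- The graph is connected: any two vertices are joined by some walk. -/
def GConnected {V : Type*} (adj : V → V → Prop) : Prop :=
  ∀ x y, ∃ k, GWalk adj k x y

/-- The graph contains a closed walk of odd length (an "odd cycle"). -/
def HasOddClosedWalk {V : Type*} (adj : V → V → Prop) : Prop :=
  ∃ (x : V) (k : ℕ), Odd k ∧ GWalk adj k x x

/-- The graph is primitive: some `γ` works as an exponent. -/
def GPrimitive {V : Type*} (adj : V → V → Prop) : Prop :=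
  ∃ γ : ℕ, ∀ x y : V, ∀ k ≥ γ, GWalk adj k x y

/-- Adjacency of the Kronecker (tensor) product. -/
def KronAdj {V₁ V₂ : Type*} (adj₁ : V₁ → V₁ → Prop) (adj₂ : V₂ → V₂ → Prop) :
    V₁ × V₂ → V₁ × V₂ → Prop :=
  fun a b => adj₁ a.1 b.1 ∧ adj₂ a.2 b.2

section helpers
variable {V : Type*} {adj : V → V → Prop}

lemma gwalk_append {m n : ℕ} {x y z : V} (h1 : GWalk adj m x y) (h2 : GWalk adj n y z) :
    GWalk adj (m + n) x z := by
  induction m generalizing x with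
  | zero => have : x = y := h1; rw [Nat.zero_add]; exact this ▸ h2
  | succ m ih =>
    obtain ⟨w, hw, hww⟩ := h1
    rw [Nat.succ_add]
    exact ⟨w, hw, ih hww⟩

lemma gwalk_pump (hs : Symmetric adj) (hnb : ∀ v : V, ∃ w, adj v w)
    {m : ℕ} {x y : V} (h : GWalk adj m x y) (t : ℕ) : GWalk adj (m + 2 * t) x y := by
  induction t with
  | zero => simpa using h
  | succ t ih =>
    obtain ⟨z, hz⟩ := hnb y
    have h2 : GWalk adj 2 y y := ⟨z, hz, y, hs hz, rfl⟩
    have := gwalk_append ih h2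
    have e : m + 2 * t + 2 = m + 2 * (t + 1) := by ring
    rwa [e] at this

lemma noWalk_le (hs : Symmetric adj) (hnb : ∀ v : V, ∃ w, adj v w)
    {m n : ℕ} {x y : V} (h : ¬ GWalk adj n x y) (hm : m ≤ n) (hp : m % 2 = n % 2) :
    ¬ GWalk adj m x y := by
  intro hw
  apply h
  have e : n = m + 2 * ((n - m) / 2) := by omega
  rw [e]
  exact gwalk_pump hs hnb hw _

lemma blockPar (hs : Symmetric adj) (hnb : ∀ v : V, ∃ w, adj v w)
    {γ : ℕ} (hγ : IsLeast {m : ℕ | ∀ x y : V, ∀ k ≥ m, GWalk adj k x y} γ)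
    (hγ1 : 1 ≤ γ) (b : ℕ) :
    ∃ x y : V, ∀ m, m % 2 = b % 2 → m < γ → ¬ GWalk adj m x y := by
  -- extract a blocked pair at length γ - 1
  have hnotin : (γ - 1) ∉ {m : ℕ | ∀ x y : V, ∀ k ≥ m, GWalk adj k x y} := by
    intro hmem
    exact absurd (hγ.2 hmem) (by omega)
  simp only [Set.mem_setOf_eq, not_forall] at hnotin
  obtain ⟨x, y, k, hk, hnw⟩ := hnotin
  have hklt : k < γ := by
    by_contra hge
    exact hnw (hγ.1 x y k (by omega))
  have hkeq : k = γ - 1 := by omega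
  subst hkeq
  by_cases hb : b % 2 = (γ - 1) % 2
  · exact ⟨x, y, fun m hm hlt => noWalk_le hs hnb hnw (by omega) (by omega)⟩
  · obtain ⟨z, hz⟩ := hnb y
    refine ⟨x, z, fun m hm hlt => ?_⟩
    intro hw
    have hmle : m + 1 ≤ γ - 1 := by omega
    have hw' : GWalk adj (m + 1) x y := gwalk_append hw ⟨y, hs hz, rfl⟩
    exact noWalk_le hs hnb hnw hmle (by omega) hw'

end helpers

lemma kron_walk_iff {V₁ V₂ : Type*} {adj₁ : V₁ → V₁ → Prop} {adj₂ : V₂ → V₂ → Prop} :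
    ∀ (k : ℕ) (p q : V₁ × V₂),
      GWalk (KronAdj adj₁ adj₂) k p q ↔ GWalk adj₁ k p.1 q.1 ∧ GWalk adj₂ k p.2 q.2 := by
  intro k
  induction k with
  | zero => intro p q; exact ⟨fun h => by cases (show p = q from h); exact ⟨rfl, rfl⟩, fun ⟨h1, h2⟩ => Prod.ext h1 h2⟩
  | succ k ih =>
    intro p q
    constructor
    · rintro ⟨z, ⟨ha1, ha2⟩, hw⟩
      exact ⟨⟨z.1, ha1, (ih z q).mp hw |>.1⟩, ⟨z.2, ha2, (ih z q).mp hw |>.2⟩⟩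
    · rintro ⟨⟨z1, ha1, hw1⟩, ⟨z2, ha2, hw2⟩⟩
      exact ⟨(z1, z2), ⟨ha1, ha2⟩, (ih (z1, z2) q).mpr ⟨hw1, hw2⟩⟩

lemma has_nb {V : Type*} {adj : V → V → Prop} (hc : GConnected adj) {a b : V} (hab : a ≠ b) :
    ∀ v : V, ∃ w, adj v w := by
  intro v
  have : ∃ u, v ≠ u := by
    by_cases h : v = a
    · exact ⟨b, h ▸ hab⟩
    · exact ⟨a, h⟩
  obtain ⟨u, hu⟩ := this
  obtain ⟨k, hw⟩ := hc v u
  cases k with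
  | zero => exact absurd hw hu
  | succ k => obtain ⟨z, hz, _⟩ := hw; exact ⟨z, hz⟩

theorem stmt14 {V₁ V₂ : Type*} (adj₁ : V₁ → V₁ → Prop) (adj₂ : V₂ → V₂ → Prop)
    (hsymm₁ : Symmetric adj₁) (hsymm₂ : Symmetric adj₂)
    (hc₁ : GConnected adj₁) (hc₂ : GConnected adj₂)
    (hodd₁ : HasOddClosedWalk adj₁) (hodd₂ : HasOddClosedWalk adj₂)
    (γ₁ γ₂ d₁ d₂ D : ℕ)
    (hγ₁ : IsLeast {m : ℕ | ∀ x y : V₁, ∀ k ≥ m, GWalk adj₁ k x y} γ₁)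
    (hγ₂ : IsLeast {m : ℕ | ∀ x y : V₂, ∀ k ≥ m, GWalk adj₂ k x y} γ₂)
    (hd₁ : IsGreatest {m : ℕ | ∃ x y : V₁, m = GDist adj₁ x y} d₁) (h1 : 1 ≤ d₁)
    (hd₂ : IsGreatest {m : ℕ | ∃ x y : V₂, m = GDist adj₂ x y} d₂) (h2 : 1 ≤ d₂)
    (hD : IsGreatest {m : ℕ | ∃ x y : V₁ × V₂, m = GDist (KronAdj adj₁ adj₂) x y} D) :
    (γ₁ = γ₂ → γ₁ ≤ D) ∧ (γ₁ ≠ γ₂ → min γ₁ γ₂ + 1 ≤ D) := by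
  -- distinct pairs
  obtain ⟨a₁, b₁, hda⟩ := hd₁.1
  obtain ⟨a₂, b₂, hdb⟩ := hd₂.1
  have hab₁ : a₁ ≠ b₁ := by
    intro h; subst h
    have : GDist adj₁ a₁ a₁ ≤ 0 := Nat.sInf_le (show GWalk adj₁ 0 a₁ a₁ from rfl)
    omega
  have hab₂ : a₂ ≠ b₂ := by
    intro h; subst h
    have : GDist adj₂ a₂ a₂ ≤ 0 := Nat.sInf_le (show GWalk adj₂ 0 a₂ a₂ from rfl)
    omega
  have hnb₁ := has_nb hc₁ hab₁
  have hnb₂ := has_nb hc₂ hab₂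
  have hγ₁pos : 1 ≤ γ₁ := by
    by_contra h
    have h0 : γ₁ = 0 := by omega
    exact hab₁ (hγ₁.1 a₁ b₁ 0 (by omega))
  have hγ₂pos : 1 ≤ γ₂ := by
    by_contra h
    have h0 : γ₂ = 0 := by omega
    exact hab₂ (hγ₂.1 a₂ b₂ 0 (by omega))
  have key : ∀ (t : ℕ) (p q : V₁ × V₂),
      (∀ k, k < t → ¬ GWalk (KronAdj adj₁ adj₂) k p q) → t ≤ D := by
    intro t p q hblock
    have hnonempty : GWalk (KronAdj adj₁ adj₂) (max γ₁ γ₂) p q :=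
      (kron_walk_iff _ p q).mpr
        ⟨hγ₁.1 _ _ _ (le_max_left _ _), hγ₂.1 _ _ _ (le_max_right _ _)⟩
    have hmem := Nat.sInf_mem (s := {k | GWalk (KronAdj adj₁ adj₂) k p q}) ⟨_, hnonempty⟩
    have htd : t ≤ GDist (KronAdj adj₁ adj₂) p q := by
      by_contra hlt
      push_neg at hlt
      exact hblock _ hlt hmem
    exact htd.trans (hD.2 ⟨p, q, rfl⟩)
  constructor
  · intro heq
    obtain ⟨x1, y1, hb1⟩ := blockPar hsymm₁ hnb₁ hγ₁ hγ₁pos (γ₁ - 1)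
    obtain ⟨x2, y2, hb2⟩ := blockPar hsymm₂ hnb₂ hγ₂ hγ₂pos γ₂
    refine key γ₁ (x1, x2) (y1, y2) ?_
    intro k hk hw
    rw [kron_walk_iff] at hw
    by_cases hp : k % 2 = (γ₁ - 1) % 2
    · exact hb1 k hp hk hw.1
    · exact hb2 k (by omega) (by omega) hw.2
  · intro hne
    rcases lt_or_gt_of_ne hne with hlt | hlt
    · have hmin : min γ₁ γ₂ = γ₁ := by omega
      rw [hmin]
      obtain ⟨x1, y1, hb1⟩ := blockPar hsymm₁ hnb₁ hγ₁ hγ₁pos (γ₁ - 1)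
      obtain ⟨x2, y2, hb2⟩ := blockPar hsymm₂ hnb₂ hγ₂ hγ₂pos γ₁
      refine key (γ₁ + 1) (x1, x2) (y1, y2) ?_
      intro k hk hw
      rw [kron_walk_iff] at hw
      by_cases hp : k % 2 = (γ₁ - 1) % 2
      · exact hb1 k hp (by omega) hw.1
      · exact hb2 k (by omega) (by omega) hw.2
    · have hmin : min γ₁ γ₂ = γ₂ := by omega
      rw [hmin]
      obtain ⟨x2, y2, hb2⟩ := blockPar hsymm₂ hnb₂ hγ₂ hγ₂pos (γ₂ - 1)
      obtain ⟨x1, y1, hb1⟩ := blockPar hsymm₁ hnb₁ hγ₁ hγ₁pos γ₂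
      refine key (γ₂ + 1) (x1, x2) (y1, y2) ?_
      intro k hk hw
      rw [kron_walk_iff] at hw
      by_cases hp : k % 2 = (γ₂ - 1) % 2
      · exact hb2 k hp (by omega) hw.2
      · exact hb1 k (by omega) (by omega) hw.1
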